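/- arXiv:2109.06356 — 10 statements merged into one kernel-verified Lean document; each statement's English description precedes it below -/
import Mathlib

section
/- Let g > 0, b > 0 and l ≥ 0 be real numbers with l + g < √(g² + b²), and let h(θ) = l + g − g·cos θ − b·sin θ. Then there exist real numbers θ⋆ and θ̄ with −π/2 < θ⋆ < arctan(b/g) < θ̄ < arctan(b/g) + π such that h(θ⋆) = 0 and h(θ̄) = 0, and every θ in the open interval (−π/2, 3π/2) satisfying h(θ) = 0 equals θ⋆ or θ̄. In particular, the power-balance equation has exactly two solutions in (−π/2, 3π/2). -/
open Real

theorem stmt_2 (g b l : ℝ) (hg : 0 < g) (hb : 0 < b) (hl : 0 ≤ l)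
    (hfeas : l + g < Real.sqrt (g ^ 2 + b ^ 2))
    (h : ℝ → ℝ) (hdef : ∀ θ, h θ = l + g - g * Real.cos θ - b * Real.sin θ) :
    ∃ θstar θbar : ℝ,
      -(Real.pi / 2) < θstar ∧ θstar < Real.arctan (b / g) ∧
      Real.arctan (b / g) < θbar ∧ θbar < Real.arctan (b / g) + Real.pi ∧
      h θstar = 0 ∧ h θbar = 0 ∧
      ∀ θ ∈ Set.Ioo (-(Real.pi / 2)) (3 * Real.pi / 2),
        h θ = 0 → θ = θstar ∨ θ = θbar := by
  set r : ℝ := Real.sqrt (g ^ 2 + b ^ 2) with hr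
  have hrpos : 0 < r := lt_of_le_of_lt (by positivity) hfeas
  have hr2 : r ^ 2 = g ^ 2 + b ^ 2 := Real.sq_sqrt (by positivity)
  set φ : ℝ := Real.arctan (b / g) with hφ
  have hφpos : 0 < φ := by
    have := Real.arctan_strictMono (show (0:ℝ) < b / g by positivity)
    rwa [Real.arctan_zero] at this
  have hφlt : φ < π / 2 := Real.arctan_lt_pi_div_two _
  -- sqrt (1 + (b/g)^2) = r / g
  have hsq : Real.sqrt (1 + (b / g) ^ 2) = r / g := by
    rw [show (1 : ℝ) + (b / g) ^ 2 = (r / g) ^ 2 by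
      rw [div_pow, div_pow, hr2]; field_simp]
    exact Real.sqrt_sq (by positivity)
  have hcosφ : Real.cos φ = g / r := by
    rw [hφ, Real.cos_arctan, hsq]
    field_simp
  have hsinφ : Real.sin φ = b / r := by
    rw [hφ, Real.sin_arctan, hsq]
    field_simp
  -- rewrite h
  have hkey : ∀ θ, h θ = l + g - r * Real.cos (θ - φ) := by
    intro θ
    rw [hdef, Real.cos_sub, hcosφ, hsinφ]
    field_simp
    ring
  set c : ℝ := (l + g) / r with hc
  have hc0 : 0 ≤ c := by positivity
  have hc1 : c < 1 := (div_lt_one hrpos).2 hfeas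
  set A : ℝ := Real.arccos c with hA
  have hcosA : Real.cos A = c := Real.cos_arccos (by linarith) (by linarith)
  have hApos : 0 < A := Real.arccos_pos.2 hc1
  have hAle : A ≤ π / 2 := by
    have := Real.arccos_le_pi_div_two (x := c)
    exact this.2 hc0
  have hAlt : A < π := lt_of_le_of_lt hAle (by linarith [Real.pi_pos])
  have hroot : ∀ θ, h θ = 0 ↔ Real.cos (θ - φ) = Real.cos A := by
    intro θ
    rw [hkey, hcosA, hc]
    constructor
    · intro hθ; field_simp; linarith
    · intro hθ; rw [hθ]; field_simp; ring
  have hπ : 0 < π := Real.pi_pos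
  refine ⟨φ - A, φ + A, by linarith, by linarith, by linarith, by linarith,
    (hroot _).2 (by rw [show φ - A - φ = -A by ring, Real.cos_neg]),
    (hroot _).2 (by rw [show φ + A - φ = A by ring]), ?_⟩
  · intro θ hθ hθ0
    obtain ⟨hθl, hθu⟩ := hθ
    have := (hroot θ).1 hθ0
    rw [Real.cos_eq_cos_iff] at this
    obtain ⟨k, hk | hk⟩ := this
    · -- θ - φ = 2kπ + A, i.e. θ = φ + A + 2kπ
      right
      have hk0 : (k : ℝ) = 0 := by
        have h1 : (-1 : ℝ) < k := by nlinarith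
        have h2 : (k : ℝ) < 1 := by nlinarith
        have : (-1 : ℤ) < k := by exact_mod_cast h1
        have : k < (1 : ℤ) := by exact_mod_cast h2
        have : k = 0 := by omega
        exact_mod_cast this
      rw [hk0] at hk
      linarith [hk]
    · -- θ - φ = 2kπ - A, i.e. θ = φ - A + 2kπ
      left
      have hk0 : (k : ℝ) = 0 := by
        have h1 : (-1 : ℝ) < k := by nlinarith
        have h2 : (k : ℝ) < 1 := by nlinarith
        have : (-1 : ℤ) < k := by exact_mod_cast h1
        have : k < (1 : ℤ) := by exact_mod_cast h2
        have : k = 0 := by omega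
        exact_mod_cast this
      rw [hk0] at hk
      linarith [hk]
end

section
/- Let g > 0, b > 0 and l be real numbers, let h(θ) = l + g − g·cos θ − b·sin θ, and suppose θ⋆ ∈ (−π/2, arctan(b/g)) satisfies h(θ⋆) = 0. Then for every θ ∈ (−π/2, arctan(b/g)) with θ ≠ θ⋆ one has h(θ)·(g·sin θ − b·cos θ)·(θ⋆ − θ) < 0. -/
theorem stmt_4 (g b l : ℝ) (hg : 0 < g) (hb : 0 < b)
    (h : ℝ → ℝ) (hdef : ∀ θ, h θ = l + g - g * Real.cos θ - b * Real.sin θ)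
    (θstar : ℝ) (hθstar : θstar ∈ Set.Ioo (-(Real.pi / 2)) (Real.arctan (b / g)))
    (hroot : h θstar = 0) :
    ∀ θ ∈ Set.Ioo (-(Real.pi / 2)) (Real.arctan (b / g)), θ ≠ θstar →
      h θ * (g * Real.sin θ - b * Real.cos θ) * (θstar - θ) < 0 := by
  have harctan : Real.arctan (b / g) < Real.pi / 2 := Real.arctan_lt_pi_div_two _
  -- derivative negative on the interval
  have hderivneg : ∀ θ ∈ Set.Ioo (-(Real.pi / 2)) (Real.arctan (b / g)),
      g * Real.sin θ - b * Real.cos θ < 0 := by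
    intro θ hθ
    have hcos : 0 < Real.cos θ :=
      Real.cos_pos_of_mem_Ioo ⟨hθ.1, lt_trans hθ.2 harctan⟩
    have htan : Real.tan θ < b / g := by
      have := Real.strictMonoOn_tan (a := θ) (b := Real.arctan (b / g))
        ⟨hθ.1, lt_trans hθ.2 harctan⟩
        ⟨Real.neg_pi_div_two_lt_arctan _, harctan⟩ hθ.2
      rwa [Real.tan_arctan] at this
    rw [Real.tan_eq_sin_div_cos, div_lt_div_iff₀ hcos hg] at htan
    nlinarith
  have hder : ∀ θ, HasDerivAt h (g * Real.sin θ - b * Real.cos θ) θ := by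
    intro θ
    have : HasDerivAt (fun θ => l + g - g * Real.cos θ - b * Real.sin θ)
        (g * Real.sin θ - b * Real.cos θ) θ := by
      have h1 := (Real.hasDerivAt_cos θ).const_mul g
      have h2 := (Real.hasDerivAt_sin θ).const_mul b
      have := ((hasDerivAt_const θ (l + g)).sub h1).sub h2
      exact this.congr_deriv (by ring)
    exact this.congr_of_eventuallyEq (Filter.Eventually.of_forall fun x => hdef x)
  have hanti : StrictAntiOn h (Set.Ioo (-(Real.pi / 2)) (Real.arctan (b / g))) := by
    apply strictAntiOn_of_deriv_neg (convex_Ioo _ _)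
    · exact Continuous.continuousOn (by
        have : h = fun θ => l + g - g * Real.cos θ - b * Real.sin θ := funext hdef
        rw [this]; continuity)
    · intro x hx
      rw [interior_Ioo] at hx
      rw [(hder x).deriv]
      exact hderivneg x hx
  intro θ hθ hne
  have hd := hderivneg θ hθ
  rcases lt_or_gt_of_ne hne with hlt | hgt
  · have hpos : 0 < h θ := by
      have := hanti hθ hθstar hlt
      rw [hroot] at this; exact this
    exact mul_neg_of_neg_of_pos (mul_neg_of_pos_of_neg hpos hd) (sub_pos.mpr hlt)
  · have hneg : h θ < 0 := by
      have := hanti hθstar hθ hgt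
      rw [hroot] at this; exact this
    exact mul_neg_of_pos_of_neg (mul_pos_of_neg_of_neg hneg hd) (sub_neg.mpr hgt)
end

section
/- Let g > 0, b > 0 and l be real numbers, let h(θ) = l + g − g·cos θ − b·sin θ, and suppose θ⋆ and θ̄ satisfy −π/2 < θ⋆ < arctan(b/g) < θ̄ < arctan(b/g) + π with h(θ⋆) = 0 and h(θ̄) = 0. Then cos θ⋆ > cos θ̄, and consequently g − g·cos θ⋆ + b·sin θ⋆ < g − g·cos θ̄ + b·sin θ̄; that is, the generation (and hence the increasing generation cost) at the root θ⋆ is strictly smaller than at the root θ̄, so θ⋆ is the global minimum of the 2-bus ACOPF and θ̄ is a strict local minimum. -/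
theorem stmt_6 (g b l : ℝ) (hg : 0 < g) (hb : 0 < b)
    (h : ℝ → ℝ) (hdef : ∀ θ, h θ = l + g - g * Real.cos θ - b * Real.sin θ)
    (θstar θbar : ℝ)
    (h1 : -(Real.pi / 2) < θstar) (h2 : θstar < Real.arctan (b / g))
    (h3 : Real.arctan (b / g) < θbar) (h4 : θbar < Real.arctan (b / g) + Real.pi)
    (hroot1 : h θstar = 0) (hroot2 : h θbar = 0) :
    Real.cos θbar < Real.cos θstar ∧
    g - g * Real.cos θstar + b * Real.sin θstar
      < g - g * Real.cos θbar + b * Real.sin θbar := by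
  set φ := Real.arctan (b / g) with hφ
  have hφpos : 0 < φ := by
    rw [hφ, ← Real.arctan_zero]
    exact Real.arctan_strictMono (div_pos hb hg)
  have hφlt : φ < Real.pi / 2 := Real.arctan_lt_pi_div_two _
  have hcosφ : 0 < Real.cos φ :=
    Real.cos_pos_of_mem_Ioo ⟨by linarith, hφlt⟩
  have hr1 := hroot1; rw [hdef] at hr1
  have hr2 := hroot2; rw [hdef] at hr2
  have he : g * Real.cos θstar + b * Real.sin θstar
      = g * Real.cos θbar + b * Real.sin θbar := by linarith
  have hbg : b * Real.cos φ = g * Real.sin φ := by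
    have ht : Real.tan φ = b / g := Real.tan_arctan _
    rw [Real.tan_eq_sin_div_cos] at ht
    field_simp at ht
    linarith
  have hc : Real.cos (θbar - φ) = Real.cos (φ - θstar) := by
    have key : g * Real.cos (θstar - φ) = g * Real.cos (θbar - φ) := by
      rw [Real.cos_sub, Real.cos_sub]
      linear_combination Real.cos φ * he + (Real.sin θbar - Real.sin θstar) * hbg
    have : Real.cos (θstar - φ) = Real.cos (θbar - φ) := mul_left_cancel₀ hg.ne' key
    rw [← this, ← Real.cos_neg (θstar - φ)]; ring_nf
  have heq : θbar - φ = φ - θstar := by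
    apply Real.injOn_cos ⟨by linarith, by linarith⟩ ⟨by linarith, by linarith⟩ hc
  have hsum : θbar + θstar = 2 * φ := by linarith
  have hcoslt : Real.cos θbar < Real.cos θstar := by
    rcases le_or_gt θbar Real.pi with hle | hgt
    · have habs : |θstar| < θbar := by
        rw [abs_lt]; constructor <;> linarith
      have := Real.cos_lt_cos_of_nonneg_of_le_pi (abs_nonneg θstar) hle habs
      rwa [Real.cos_abs] at this
    · have hneg : Real.cos θbar < 0 :=
        Real.cos_neg_of_pi_div_two_lt_of_lt (by linarith [Real.pi_pos])
          (by linarith [Real.pi_pos])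
      have hpos : 0 < Real.cos θstar :=
        Real.cos_pos_of_mem_Ioo ⟨h1, by linarith⟩
      linarith
  refine ⟨hcoslt, ?_⟩
  have p1 : g - g * Real.cos θstar + b * Real.sin θstar
      = l + 2 * g - 2 * g * Real.cos θstar := by linarith
  have p2 : g - g * Real.cos θbar + b * Real.sin θbar
      = l + 2 * g - 2 * g * Real.cos θbar := by linarith
  rw [p1, p2]
  nlinarith
end

section
/- Let g > 0, b > 0, c > 0, μ > 0 and l be real numbers, and define L(θ) = c·(g − g·cos θ + b·sin θ) + μ·(l + g − g·cos θ − b·sin θ). Set θ̂ = arctan(((μ−c)/(μ+c))·(b/g)). Then L(θ̂) ≤ L(θ) for every real θ; that is, θ̂ is a global minimizer of the partial Lagrangian over all of ℝ. -/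
theorem stmt_9 (g b c μ l : ℝ) (hg : 0 < g) (hb : 0 < b) (hc : 0 < c) (hμ : 0 < μ)
    (L : ℝ → ℝ)
    (hL : ∀ θ, L θ = c * (g - g * Real.cos θ + b * Real.sin θ)
        + μ * (l + g - g * Real.cos θ - b * Real.sin θ))
    (θhat : ℝ) (hθhat : θhat = Real.arctan ((μ - c) / (μ + c) * (b / g))) :
    ∀ θ : ℝ, L θhat ≤ L θ := by
  intro θ
  set A : ℝ := (c + μ) * g with hA
  set B : ℝ := (μ - c) * b with hB
  have hA0 : 0 < A := by positivity
  have hx : (μ - c) / (μ + c) * (b / g) = B / A := by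
    rw [hA, hB, div_mul_div_comm]; ring_nf
  rw [hL θhat, hL θ]
  have key : A * Real.cos θ + B * Real.sin θ ≤ A * Real.cos θhat + B * Real.sin θhat := by
    have hval : A * Real.cos θhat + B * Real.sin θhat = Real.sqrt (A ^ 2 + B ^ 2) := by
      rw [hθhat, hx, Real.cos_arctan, Real.sin_arctan]
      have hs : Real.sqrt (1 + (B / A) ^ 2) = Real.sqrt (A ^ 2 + B ^ 2) / A := by
        rw [eq_div_iff hA0.ne', ← Real.sqrt_sq hA0.le, ← Real.sqrt_mul (by positivity)]
        congr 1
        field_simp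
        rw [Real.sq_sqrt (by positivity)]
      rw [hs]
      field_simp
      ring
      rw [Real.sq_sqrt (by positivity)]
    rw [hval]
    have hr0 : 0 ≤ Real.sqrt (A ^ 2 + B ^ 2) := Real.sqrt_nonneg _
    have hr2 : Real.sqrt (A ^ 2 + B ^ 2) ^ 2 = A ^ 2 + B ^ 2 := Real.sq_sqrt (by positivity)
    have hpyth := Real.sin_sq_add_cos_sq θ
    nlinarith [sq_nonneg (A * Real.sin θ - B * Real.cos θ),
      sq_nonneg (Real.sqrt (A ^ 2 + B ^ 2) - (A * Real.cos θ + B * Real.sin θ))]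
  rw [hA, hB] at key
  nlinarith [key]
end

section
/- Let g > 0, b > 0, μ and θ be real numbers with (1+μ)·g·sin θ + (1−μ)·b·cos θ = 0 and g·sin θ − b·cos θ ≠ 0. Then (1+μ)·g·cos θ − (1−μ)·b·sin θ = −2·g·b/(g·sin θ − b·cos θ); in particular this quantity is strictly positive if θ ∈ (−π/2, arctan(b/g)) and strictly negative if θ ∈ (arctan(b/g), arctan(b/g) + π). Hence the partial Lagrangian's stationary point in (−π/2, arctan(b/g)) is a minimum and its stationary point in (arctan(b/g), arctan(b/g) + π) is a maximum. -/
theorem stmt_12 (g b μ θ : ℝ) (hg : 0 < g) (hb : 0 < b)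
    (hopt : (1 + μ) * g * Real.sin θ + (1 - μ) * b * Real.cos θ = 0)
    (hne : g * Real.sin θ - b * Real.cos θ ≠ 0) :
    (1 + μ) * g * Real.cos θ - (1 - μ) * b * Real.sin θ
      = -2 * g * b / (g * Real.sin θ - b * Real.cos θ) ∧
    (θ ∈ Set.Ioo (-(Real.pi / 2)) (Real.arctan (b / g)) →
      0 < (1 + μ) * g * Real.cos θ - (1 - μ) * b * Real.sin θ) ∧
    (θ ∈ Set.Ioo (Real.arctan (b / g)) (Real.arctan (b / g) + Real.pi) →
      (1 + μ) * g * Real.cos θ - (1 - μ) * b * Real.sin θ < 0) := by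
  have key : ((1 + μ) * g * Real.cos θ - (1 - μ) * b * Real.sin θ)
      * (g * Real.sin θ - b * Real.cos θ) = -2 * g * b := by
    linear_combination (g * Real.cos θ + b * Real.sin θ) * hopt
      - 2 * g * b * (Real.sin_sq_add_cos_sq θ)
  have hE : (1 + μ) * g * Real.cos θ - (1 - μ) * b * Real.sin θ
      = -2 * g * b / (g * Real.sin θ - b * Real.cos θ) :=
    (eq_div_iff hne).2 key
  set α := Real.arctan (b / g) with hαdef
  have hα2 : α < Real.pi / 2 := Real.arctan_lt_pi_div_two _
  have hα1 : -(Real.pi / 2) < α := Real.neg_pi_div_two_lt_arctan _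
  have hca : 0 < Real.cos α := Real.cos_pos_of_mem_Ioo ⟨hα1, hα2⟩
  have hbg : b = g * Real.tan α := by
    rw [hαdef, Real.tan_arctan]; field_simp
  have hrw : g * Real.sin θ - b * Real.cos θ
      = (g / Real.cos α) * Real.sin (θ - α) := by
    rw [Real.sin_sub, hbg, Real.tan_eq_sin_div_cos]
    field_simp
  refine ⟨hE, ?_, ?_⟩
  · rintro ⟨h1, h2⟩
    have hsin : Real.sin (θ - α) < 0 := by
      apply Real.sin_neg_of_neg_of_neg_pi_lt <;> nlinarith [Real.pi_pos]
    have hneg : g * Real.sin θ - b * Real.cos θ < 0 := by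
      rw [hrw]
      exact mul_neg_of_pos_of_neg (div_pos hg hca) hsin
    rw [hE]
    exact div_pos_of_neg_of_neg (by nlinarith) hneg
  · rintro ⟨h1, h2⟩
    have hsin : 0 < Real.sin (θ - α) :=
      Real.sin_pos_of_pos_of_lt_pi (by linarith) (by linarith)
    have hpos : 0 < g * Real.sin θ - b * Real.cos θ := by
      rw [hrw]
      exact mul_pos (div_pos hg hca) hsin
    rw [hE]
    exact div_neg_of_neg_of_pos (by nlinarith) hpos
end

section
/- Let g > 0, b, θ, V₁ > 0 and V₂ > 0 be real numbers. Then: (i) if 2g·V₁ − V₂·(g·cos θ − b·sin θ) = 0, then −V₁·(g·cos θ − b·sin θ) = −2g·V₁²/V₂ < 0; and (ii) if g·cos θ − b·sin θ = 0, then 2g·V₁ − V₂·(g·cos θ − b·sin θ) = 2g·V₁ > 0. Consequently the two quantities 2g·V₁ − V₂·(g·cos θ − b·sin θ) and −V₁·(g·cos θ − b·sin θ) never vanish simultaneously. -/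
theorem stmt_13 (g b θ V₁ V₂ : ℝ) (hg : 0 < g) (hV₁ : 0 < V₁) (hV₂ : 0 < V₂) :
    (2 * g * V₁ - V₂ * (g * Real.cos θ - b * Real.sin θ) = 0 →
      -V₁ * (g * Real.cos θ - b * Real.sin θ) = -(2 * g * V₁ ^ 2) / V₂ ∧
      -V₁ * (g * Real.cos θ - b * Real.sin θ) < 0) ∧
    (g * Real.cos θ - b * Real.sin θ = 0 →
      2 * g * V₁ - V₂ * (g * Real.cos θ - b * Real.sin θ) = 2 * g * V₁ ∧
      0 < 2 * g * V₁ - V₂ * (g * Real.cos θ - b * Real.sin θ)) ∧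
    ¬(2 * g * V₁ - V₂ * (g * Real.cos θ - b * Real.sin θ) = 0 ∧
      -V₁ * (g * Real.cos θ - b * Real.sin θ) = 0) := by
  set c := g * Real.cos θ - b * Real.sin θ with hc
  have hkey : 2 * g * V₁ - V₂ * c = 0 → c = 2 * g * V₁ / V₂ := by
    intro h; field_simp; linarith
  refine ⟨?_, ?_, ?_⟩
  · intro h
    have hcv := hkey h
    constructor
    · rw [hcv]; field_simp
    · rw [hcv]
      have : 0 < 2 * g * V₁ / V₂ := by positivity
      nlinarith
  · intro h
    rw [h]; constructor
    · ring
    · nlinarith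
  · rintro ⟨h1, h2⟩
    have hcv := hkey h1
    rw [hcv] at h2
    have : 0 < V₁ * (2 * g * V₁ / V₂) := by positivity
    linarith [h2]
end

section
/- Let g > 0, b > 0, V₁ > 0, V₂ > 0, μ and θ be real numbers with θ ∈ (−π/2, arctan(b/g)), and suppose (1+μ)·g·sin θ + (1−μ)·b·cos θ = 0. Then the symmetric 2×2 real matrix with (1,1) entry V₁·V₂·((1+μ)·g·cos θ − (1−μ)·b·sin θ), (1,2) and (2,1) entries V₂·((1+μ)·g·sin θ + (1−μ)·b·cos θ), and (2,2) entry 2g, is positive definite. -/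
theorem stmt_14 (g b V₁ V₂ μ θ : ℝ) (hg : 0 < g) (hb : 0 < b)
    (hV₁ : 0 < V₁) (hV₂ : 0 < V₂)
    (hθ : θ ∈ Set.Ioo (-(Real.pi / 2)) (Real.arctan (b / g)))
    (hopt : (1 + μ) * g * Real.sin θ + (1 - μ) * b * Real.cos θ = 0) :
    (!![V₁ * V₂ * ((1 + μ) * g * Real.cos θ - (1 - μ) * b * Real.sin θ),
        V₂ * ((1 + μ) * g * Real.sin θ + (1 - μ) * b * Real.cos θ);
        V₂ * ((1 + μ) * g * Real.sin θ + (1 - μ) * b * Real.cos θ),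
        2 * g] : Matrix (Fin 2) (Fin 2) ℝ).PosDef := by
  obtain ⟨h1, h2⟩ := hθ
  set s := Real.sin θ with hs
  set c := Real.cos θ with hc
  have hθlt : θ < Real.pi / 2 := h2.trans (Real.arctan_lt_pi_div_two _)
  have hcpos : 0 < c := Real.cos_pos_of_mem_Ioo ⟨h1, hθlt⟩
  have hpyth : s ^ 2 + c ^ 2 = 1 := Real.sin_sq_add_cos_sq θ
  have htan : g * s < b * c := by
    have ht : Real.tan θ < b / g := by
      calc Real.tan θ < Real.tan (Real.arctan (b / g)) :=
            Real.tan_lt_tan_of_lt_of_lt_pi_div_two h1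
              (Real.arctan_lt_pi_div_two _) h2
        _ = b / g := Real.tan_arctan _
    rw [Real.tan_eq_sin_div_cos θ, div_lt_div_iff₀ hcpos hg] at ht
    linarith
  have hE : 0 < (1 + μ) * g * c - (1 - μ) * b * s := by
    by_contra hle
    push_neg at hle
    have h1' : ((1 + μ) * g * c - (1 - μ) * b * s) * c = (1 + μ) * g := by
      linear_combination (-s) * hopt + (1 + μ) * g * hpyth
    have h2' : ((1 + μ) * g * c - (1 - μ) * b * s) * s = -((1 - μ) * b) := by
      linear_combination c * hopt - (1 - μ) * b * hpyth
    rcases lt_or_eq_of_le hle with hlt | heq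
    · have hμg : (1 + μ) * g < 0 := by
        rw [← h1']; exact mul_neg_of_neg_of_pos hlt hcpos
      have hμ : 1 + μ < 0 := by nlinarith
      nlinarith [mul_pos hb hcpos]
    · have e1 : (1 + μ) * g = 0 := by rw [← h1', heq, zero_mul]
      have e2 : (1 - μ) * b = 0 := by
        have h := h2'; rw [heq, zero_mul] at h; linarith
      have hμ1 : (1 + μ) = 0 :=
        (mul_eq_zero.mp e1).resolve_right (ne_of_gt hg)
      have hμ2 : (1 - μ) = 0 :=
        (mul_eq_zero.mp e2).resolve_right (ne_of_gt hb)
      linarith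
  have hA : 0 < V₁ * V₂ * ((1 + μ) * g * c - (1 - μ) * b * s) :=
    mul_pos (mul_pos hV₁ hV₂) hE
  have hoff : V₂ * ((1 + μ) * g * s + (1 - μ) * b * c) = 0 := by
    rw [hopt, mul_zero]
  rw [Matrix.posDef_iff_dotProduct_mulVec]
  constructor
  · ext i j
    fin_cases i <;> fin_cases j <;>
      simp [Matrix.conjTranspose_apply]
  · intro x hx
    simp only [dotProduct, Matrix.mulVec, Fin.sum_univ_two,
      Matrix.cons_val', Matrix.cons_val_zero, Matrix.cons_val_one,
      Matrix.head_cons, Matrix.head_fin_const, Matrix.empty_val',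
      Matrix.cons_val_fin_one, RCLike.star_def, starRingEnd_apply, star_trivial]
    rw [hoff]
    simp only [Matrix.of_apply, Matrix.cons_val', Matrix.cons_val_zero,
      Matrix.cons_val_one, Matrix.head_cons, Matrix.empty_val',
      Matrix.cons_val_fin_one, Matrix.head_fin_const]
    have hx01 : x 0 ≠ 0 ∨ x 1 ≠ 0 := by
      by_contra h
      push_neg at h
      exact hx (funext fun i => by fin_cases i <;> simp [h.1, h.2])
    rcases hx01 with h | h
    · nlinarith [mul_pos hA (mul_self_pos.mpr h), mul_self_nonneg (x 1), hg]
    · nlinarith [mul_pos (mul_pos two_pos hg) (mul_self_pos.mpr h),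
        mul_self_nonneg (x 0), hA.le]
end

section
/- Let g > 0, b > 0, V₁ > 0, V₂ > 0, μ and θ be real numbers with θ ∈ (arctan(b/g), arctan(b/g) + π), and suppose (1+μ)·g·sin θ + (1−μ)·b·cos θ = 0. Then the symmetric 2×2 real matrix with (1,1) entry V₁·V₂·((1+μ)·g·cos θ − (1−μ)·b·sin θ), (1,2) and (2,1) entries V₂·((1+μ)·g·sin θ + (1−μ)·b·cos θ), and (2,2) entry 2g, is not positive semidefinite. -/
theorem stmt_15 (g b V₁ V₂ μ θ : ℝ) (hg : 0 < g) (hb : 0 < b)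
    (hV₁ : 0 < V₁) (hV₂ : 0 < V₂)
    (hθ : θ ∈ Set.Ioo (Real.arctan (b / g)) (Real.arctan (b / g) + Real.pi))
    (hopt : (1 + μ) * g * Real.sin θ + (1 - μ) * b * Real.cos θ = 0) :
    ¬ (!![V₁ * V₂ * ((1 + μ) * g * Real.cos θ - (1 - μ) * b * Real.sin θ),
          V₂ * ((1 + μ) * g * Real.sin θ + (1 - μ) * b * Real.cos θ);
          V₂ * ((1 + μ) * g * Real.sin θ + (1 - μ) * b * Real.cos θ),
          2 * g] : Matrix (Fin 2) (Fin 2) ℝ).PosSemidef := by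
  intro hpsd
  obtain ⟨h1, h2⟩ := hθ
  set α := Real.arctan (b / g) with hα
  -- sin (θ - α) > 0
  have hsin : 0 < Real.sin (θ - α) := by
    apply Real.sin_pos_of_pos_of_lt_pi <;> [linarith; linarith]
  rw [Real.sin_sub] at hsin
  have hca : Real.cos α = 1 / Real.sqrt (1 + (b / g) ^ 2) := Real.cos_arctan (b / g)
  have hsa : Real.sin α = (b / g) / Real.sqrt (1 + (b / g) ^ 2) := Real.sin_arctan (b / g)
  have hsq : 0 < Real.sqrt (1 + (b / g) ^ 2) := by positivity
  -- g sin θ - b cos θ > 0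
  have hs : 0 < g * Real.sin θ - b * Real.cos θ := by
    rw [hca, hsa] at hsin
    have h := mul_pos hsin (mul_pos hg hsq)
    have hg' : g ≠ 0 := ne_of_gt hg
    field_simp at h
    nlinarith [h]
  -- the (0,0) entry is negative
  have hpyth := Real.sin_sq_add_cos_sq θ
  have hid : ((1 + μ) * g * Real.cos θ - (1 - μ) * b * Real.sin θ) *
      (g * Real.sin θ - b * Real.cos θ) = -(2 * g * b) := by
    linear_combination (b * Real.sin θ + g * Real.cos θ) * hopt - (2 * g * b) * hpyth
  have hD : (1 + μ) * g * Real.cos θ - (1 - μ) * b * Real.sin θ < 0 := by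
    by_contra hD
    push_neg at hD
    nlinarith [mul_nonneg hD hs.le, mul_pos hg hb]
  have key := hpsd.dotProduct_mulVec_nonneg ![1, 0]
  simp [Matrix.mulVec, dotProduct, Fin.sum_univ_two] at key
  nlinarith [mul_pos hV₁ hV₂, key]
end

section
/- Let g > 0, b > 0, V₁ > 0, V₂ > 0, μ > 0 and θ be real numbers with θ ∈ (−π/2, arctan(b/g)), and suppose (1+μ)·g·sin θ + (1−μ)·b·cos θ = 0. Then the symmetric 2×2 real matrix with (1,1) entry V₁·V₂·((1+μ)·g·cos θ − (1−μ)·b·sin θ), (1,2) and (2,1) entries V₁·((1+μ)·g·sin θ + (1−μ)·b·cos θ), and (2,2) entry 2g·μ, is positive definite. -/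
theorem stmt_16 (g b V₁ V₂ μ θ : ℝ) (hg : 0 < g) (hb : 0 < b)
    (hV₁ : 0 < V₁) (hV₂ : 0 < V₂) (hμ : 0 < μ)
    (hθ : θ ∈ Set.Ioo (-(Real.pi / 2)) (Real.arctan (b / g)))
    (hopt : (1 + μ) * g * Real.sin θ + (1 - μ) * b * Real.cos θ = 0) :
    (!![V₁ * V₂ * ((1 + μ) * g * Real.cos θ - (1 - μ) * b * Real.sin θ),
        V₁ * ((1 + μ) * g * Real.sin θ + (1 - μ) * b * Real.cos θ);
        V₁ * ((1 + μ) * g * Real.sin θ + (1 - μ) * b * Real.cos θ),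
        2 * g * μ] : Matrix (Fin 2) (Fin 2) ℝ).PosDef := by
  obtain ⟨h1, h2⟩ := hθ
  have hcos : 0 < Real.cos θ := by
    apply Real.cos_pos_of_mem_Ioo
    exact ⟨h1, lt_trans h2 (Real.arctan_lt_pi_div_two _)⟩
  -- sin θ from hopt
  have hμ1 : 0 < (1 + μ) * g := by positivity
  have hsin : Real.sin θ = -((1 - μ) * b * Real.cos θ) / ((1 + μ) * g) := by
    field_simp
    linarith
  have hA : 0 < (1 + μ) * g * Real.cos θ - (1 - μ) * b * Real.sin θ := by
    rw [hsin]
    have key : (1 + μ) * g * Real.cos θ - (1 - μ) * b * (-((1 - μ) * b * Real.cos θ) / ((1 + μ) * g))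
        = (((1 + μ) * g * ((1 + μ) * g) + ((1 - μ) * b) ^ 2) * Real.cos θ) / ((1 + μ) * g) := by
      field_simp
      ring
    rw [key]
    apply div_pos _ hμ1
    have : 0 < (1 + μ) * g * ((1 + μ) * g) + ((1 - μ) * b) ^ 2 := by positivity
    positivity
  rw [Matrix.posDef_iff_dotProduct_mulVec]
  constructor
  · ext i j
    fin_cases i <;> fin_cases j <;> simp [Matrix.conjTranspose, Matrix.vecHead, Matrix.vecTail, Matrix.transpose]
  · intro x hx
    have hx' : x 0 ≠ 0 ∨ x 1 ≠ 0 := by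
      by_contra h
      push_neg at h
      exact hx (funext fun i => by fin_cases i <;> simp [h.1, h.2])
    simp [Matrix.mulVec, dotProduct, Fin.sum_univ_two, hopt, mul_zero]
    have h0 : 0 < V₁ * V₂ * ((1 + μ) * g * Real.cos θ - (1 - μ) * b * Real.sin θ) := by
      positivity
    have hd : 0 < 2 * g * μ := by positivity
    rcases hx' with h | h
    · have := mul_self_pos.mpr h
      have := mul_self_nonneg (x 1)
      nlinarith
    · have := mul_self_pos.mpr h
      have := mul_self_nonneg (x 0)
      nlinarith
end

section
/- Let g > 0, b > 0, V₁ > 0, V₂ > 0, μ > 0 and θ be real numbers with θ ∈ (arctan(b/g), arctan(b/g) + π), and suppose (1+μ)·g·sin θ + (1−μ)·b·cos θ = 0. Then the symmetric 2×2 real matrix with (1,1) entry V₁·V₂·((1+μ)·g·cos θ − (1−μ)·b·sin θ), (1,2) and (2,1) entries V₁·((1+μ)·g·sin θ + (1−μ)·b·cos θ), and (2,2) entry 2g·μ, is not positive semidefinite. -/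
theorem stmt_17 (g b V₁ V₂ μ θ : ℝ) (hg : 0 < g) (hb : 0 < b)
    (hV₁ : 0 < V₁) (hV₂ : 0 < V₂) (hμ : 0 < μ)
    (hθ : θ ∈ Set.Ioo (Real.arctan (b / g)) (Real.arctan (b / g) + Real.pi))
    (hopt : (1 + μ) * g * Real.sin θ + (1 - μ) * b * Real.cos θ = 0) :
    ¬ (!![V₁ * V₂ * ((1 + μ) * g * Real.cos θ - (1 - μ) * b * Real.sin θ),
          V₁ * ((1 + μ) * g * Real.sin θ + (1 - μ) * b * Real.cos θ);
          V₁ * ((1 + μ) * g * Real.sin θ + (1 - μ) * b * Real.cos θ),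
          2 * g * μ] : Matrix (Fin 2) (Fin 2) ℝ).PosSemidef := by
  intro hpsd
  have hpyth := Real.sin_sq_add_cos_sq θ
  have hα0 : 0 < Real.arctan (b / g) := by
    have := Real.arctan_strictMono (show (0:ℝ) < b/g by positivity)
    simpa using this
  have hαlt : Real.arctan (b / g) < Real.pi / 2 := Real.arctan_lt_pi_div_two _
  have hcosne : Real.cos θ ≠ 0 := by
    intro h0
    rw [h0] at hopt
    have hs : Real.sin θ = 0 := by
      have h1μ : 0 < (1 + μ) * g := by positivity
      nlinarith
    nlinarith
  have hcosneg : Real.cos θ < 0 := by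
    by_contra hpos
    push_neg at hpos
    have hcp : 0 < Real.cos θ := lt_of_le_of_ne hpos (Ne.symm hcosne)
    have hθlt : θ < Real.pi / 2 := by
      by_contra hge
      push_neg at hge
      have hle : θ ≤ Real.pi + Real.pi / 2 := by
        have := hθ.2; linarith
      have : Real.cos θ ≤ 0 :=
        Real.cos_nonpos_of_pi_div_two_le_of_le hge hle
      linarith
    have hθgt : -(Real.pi / 2) < θ := by
      have := hθ.1; linarith
    have htan : Real.tan (Real.arctan (b / g)) < Real.tan θ := by
      apply Real.strictMonoOn_tan
      · exact ⟨by linarith [Real.neg_pi_div_two_lt_arctan (b / g)], by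
          simpa using hαlt⟩
      · exact ⟨by simpa using hθgt, by simpa using hθlt⟩
      · exact hθ.1
    rw [Real.tan_arctan, Real.tan_eq_sin_div_cos] at htan
    have hbg : b * Real.cos θ < g * Real.sin θ := by
      have := (div_lt_div_iff₀ hg hcp).1 htan
      linarith
    have hsinpos : 0 < Real.sin θ := by
      nlinarith
    nlinarith
  -- the (1,1) entry is negative
  have hA : 0 < (1 + μ) * g := by positivity
  have hentry : (1 + μ) * g * Real.cos θ - (1 - μ) * b * Real.sin θ < 0 := by
    have key : (1 + μ) * g * ((1 + μ) * g * Real.cos θ - (1 - μ) * b * Real.sin θ)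
        = (((1 + μ) * g) ^ 2 + ((1 - μ) * b) ^ 2) * Real.cos θ
          - (1 - μ) * b * ((1 + μ) * g * Real.sin θ + (1 - μ) * b * Real.cos θ) := by
      ring
    rw [hopt, mul_zero, sub_zero] at key
    have hrhs : (((1 + μ) * g) ^ 2 + ((1 - μ) * b) ^ 2) * Real.cos θ < 0 :=
      mul_neg_of_pos_of_neg (by positivity) hcosneg
    nlinarith [hrhs, key, hA]
  have h00 := (Matrix.posSemidef_iff_dotProduct_mulVec.mp hpsd).2 ![1, 0]
  simp [Matrix.mulVec, dotProduct, Fin.sum_univ_two] at h00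
  nlinarith [mul_pos hV₁ hV₂, mul_neg_of_pos_of_neg (mul_pos hV₁ hV₂) hentry]
end
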